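/- arXiv:1104.4523 — 2 statements merged into one kernel-verified Lean document; each statement's English description precedes it below -/
import Mathlib

section
/- Let R be a commutative ring, G a finite group, H ≤ G a subgroup of index d, and V an H-module over R which is free as an R-module. Give W := ⊗_{i=1}^{d} Sym_R(V) (tensor product over a set of coset representatives g₁H,…,g_dH) the tensor-induced G-action, permuting tensor factors according to left translation on G/H twisted by the H-action. Then there is a G-equivariant R-algebra isomorphism N_H^G Sym_R(V) := ⊗_{G/H} Sym_R(V) ≅ Sym_R(Ind_H^G V), where Ind_H^G V = R[G] ⊗_{R[H]} V. -/
/-!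
The map `⨂ᵢ Sym(V) → Sym(V^d)` sending the `i`-th tensor factor into `Sym(V^d)` along the `i`-th
coordinate inclusion `V → V^d` is an algebra isomorphism: its inverse is the algebra map induced
by `v ↦ ∑ᵢ 1 ⊗ ⋯ ⊗ vᵢ ⊗ ⋯ ⊗ 1`, which exists because `⨂ᵢ Sym(V)` is commutative. The
isomorphism is natural both for linear maps applied factorwise and for permutations of the
factors. The tensor-induced action of `g` is a factorwise map (by the `h_g(i)`) followed by the
permutation `π_g`, and the induced action on `V^d` is the corresponding monomial map, so the
isomorphism is `G`-equivariant.
-/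

noncomputable section

open scoped TensorProduct

variable (R : Type*) [CommRing R]

/-- The relation on the tensor algebra whose ring quotient is the symmetric algebra. -/
inductive SymRel (V : Type*) [AddCommGroup V] [Module R V] :
    TensorAlgebra R V → TensorAlgebra R V → Prop
  | mul_comm (x y : V) : SymRel V
      (TensorAlgebra.ι R x * TensorAlgebra.ι R y)
      (TensorAlgebra.ι R y * TensorAlgebra.ι R x)

/-- The symmetric algebra `Sym_R(V)` of an `R`-module `V`. -/
abbrev MySym (V : Type*) [AddCommGroup V] [Module R V] := RingQuot (SymRel R V)

/-- The canonical linear map `V → Sym_R(V)`. -/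
def symι (V : Type*) [AddCommGroup V] [Module R V] : V →ₗ[R] MySym R V :=
  (RingQuot.mkAlgHom R (SymRel R V)).toLinearMap ∘ₗ TensorAlgebra.ι R

/-- Functoriality of the symmetric algebra: an `R`-linear map `V → W` induces an
`R`-algebra map `Sym_R(V) → Sym_R(W)`. -/
def symMap {V W : Type*} [AddCommGroup V] [Module R V] [AddCommGroup W] [Module R W]
    (f : V →ₗ[R] W) : MySym R V →ₐ[R] MySym R W :=
  RingQuot.liftAlgHom R
    ⟨TensorAlgebra.lift R ((symι R W).comp f), by
      rintro x y ⟨a, b⟩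
      have h := RingQuot.mkAlgHom_rel R (SymRel.mul_comm (R := R) (f a) (f b))
      simp only [map_mul] at h
      simp [symι, map_mul, TensorAlgebra.lift_ι_apply, h]⟩

variable {G : Type*} [Group G] (H : Subgroup G)
variable (V : Type*) [AddCommGroup V] [Module R V]
variable (ρ : H →* (V ≃ₗ[R] V))
variable {d : ℕ} (perm : G → Equiv.Perm (Fin d)) (hh : G → Fin d → H)

/-- The induced module `Ind_H^G V`, realized on `⊕_{i ∈ G/H} V = (Fin d → V)` via the
chosen coset representatives: `g · (gᵢ ⊗ x) = g_{π_g(i)} ⊗ ρ(h_g(i)) x`, i.e.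
`(g · v)(j) = ρ(h_g(π_g⁻¹ j)) (v (π_g⁻¹ j))`. -/
def indAct (g : G) : (Fin d → V) →ₗ[R] (Fin d → V) where
  toFun v := fun j => ρ (hh g ((perm g).symm j)) (v ((perm g).symm j))
  map_add' v w := by funext j; simp
  map_smul' c v := by funext j; simp

/-- The tensor-induced action of `g ∈ G` on `⊗_{i ∈ G/H} Sym_R(V)`: apply
`MySym(ρ(h_g(i)))` in each factor and permute the factors by `π_g`. -/
def normAct (g : G) :
    (⨂[R] _i : Fin d, MySym R V) →ₗ[R] ⨂[R] _i : Fin d, MySym R V :=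
  (PiTensorProduct.reindex R (fun _ : Fin d => MySym R V) (perm g)).toLinearMap ∘ₗ
    PiTensorProduct.map fun i => (symMap R ((ρ (hh g i) : V ≃ₗ[R] V) : V →ₗ[R] V)).toLinearMap

namespace LinearMap

variable {R} {ι κ : Type*} [DecidableEq ι] [DecidableEq κ]

theorem piMap_comp_single {M N : ι → Type*} [∀ i, AddCommGroup (M i)] [∀ i, Module R (M i)]
    [∀ i, AddCommGroup (N i)] [∀ i, Module R (N i)] (f : ∀ i, M i →ₗ[R] N i) (i : ι) :
    piMap f ∘ₗ single R M i = single R N i ∘ₗ f i := by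
  ext x j
  exact Pi.apply_single (fun j => f j) (fun j => map_zero (f j)) i x j

theorem funLeft_comp_single {M : Type*} [AddCommGroup M] [Module R M] (e : κ ≃ ι) (i : ι) :
    funLeft R M e ∘ₗ single R (fun _ => M) i = single R (fun _ => M) (e.symm i) := by
  ext x : 1
  exact Pi.single_comp_equiv e i x

end LinearMap

namespace MySym

section

variable {R} {M N P : Type*} [AddCommGroup M] [Module R M] [AddCommGroup N] [Module R N]
  [AddCommGroup P] [Module R P]

theorem algHom_ext {A : Type*} [Semiring A] [Algebra R A] {f g : MySym R M →ₐ[R] A}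
    (h : ∀ x, f (symι R M x) = g (symι R M x)) : f = g :=
  RingQuot.ringQuot_ext' _ _ _ <| TensorAlgebra.hom_ext <| LinearMap.ext h

theorem adjoin_range_symι : Algebra.adjoin R (Set.range (symι R M)) = ⊤ := by
  rw [symι, LinearMap.coe_comp, Set.range_comp, AlgHom.coe_toLinearMap, ← AlgHom.map_adjoin,
    TensorAlgebra.adjoin_range_ι, Algebra.map_top,
    (AlgHom.range_eq_top _).mpr (RingQuot.mkAlgHom_surjective R _)]

theorem commute_symι (x y : M) : Commute (symι R M x) (symι R M y) := by
  simpa only [commute_iff_eq, symι, LinearMap.comp_apply, AlgHom.toLinearMap_apply, map_mul]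
    using RingQuot.mkAlgHom_rel R (SymRel.mul_comm (R := R) x y)

instance : CommRing (MySym R M) where
  mul_comm a b := by
    have hgen : ∀ {c : MySym R M}, c ∈ Algebra.adjoin R (Set.range (symι R M)) := by
      simp [adjoin_range_symι]
    refine Algebra.commute_of_mem_adjoin_of_forall_mem_commute hgen ?_
    rintro _ ⟨y, rfl⟩
    refine (Algebra.commute_of_mem_adjoin_of_forall_mem_commute hgen ?_).symm
    rintro _ ⟨x, rfl⟩
    exact commute_symι y x

def lift {A : Type*} [CommSemiring A] [Algebra R A] (f : M →ₗ[R] A) : MySym R M →ₐ[R] A :=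
  RingQuot.liftAlgHom R ⟨TensorAlgebra.lift R f, by
    rintro _ _ ⟨x, y⟩
    simp only [map_mul, TensorAlgebra.lift_ι_apply]
    exact mul_comm _ _⟩

@[simp] theorem lift_symι {A : Type*} [CommSemiring A] [Algebra R A] (f : M →ₗ[R] A) (x : M) :
    lift f (symι R M x) = f x := by
  simp [lift, symι, RingQuot.liftAlgHom_mkAlgHom_apply]

@[simp] theorem symMap_symι (f : M →ₗ[R] N) (x : M) :
    symMap R f (symι R M x) = symι R N (f x) := by
  simp [symMap, symι, RingQuot.liftAlgHom_mkAlgHom_apply]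

theorem symMap_comp (f : N →ₗ[R] P) (g : M →ₗ[R] N) :
    (symMap R f).comp (symMap R g) = symMap R (f ∘ₗ g) :=
  algHom_ext fun x => by simp

theorem symMap_symMap (f : N →ₗ[R] P) (g : M →ₗ[R] N) (a : MySym R M) :
    symMap R f (symMap R g a) = symMap R (f ∘ₗ g) a :=
  AlgHom.congr_fun (symMap_comp f g) a

end

open PiTensorProduct

section

variable {R} {ι : Type*} [Fintype ι] [DecidableEq ι]
  {M N : ι → Type*} [∀ i, AddCommGroup (M i)] [∀ i, Module R (M i)]
  [∀ i, AddCommGroup (N i)] [∀ i, Module R (N i)]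

def ofPiTensor : (⨂[R] i, MySym R (M i)) →ₐ[R] MySym R (Π i, M i) :=
  liftAlgHom
    ((MultilinearMap.mkPiAlgebra R ι (MySym R (Π i, M i))).compLinearMap
      fun i => (symMap R (LinearMap.single R M i)).toLinearMap)
    (by simp) (fun x y => by simp [Finset.prod_mul_distrib])

def toPiTensor : MySym R (Π i, M i) →ₐ[R] ⨂[R] i, MySym R (M i) :=
  lift <| ∑ i, (singleAlgHom i).toLinearMap ∘ₗ symι R (M i) ∘ₗ LinearMap.proj i

@[simp] theorem ofPiTensor_tprod (x : Π i, MySym R (M i)) :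
    ofPiTensor (tprod R x) = ∏ i, symMap R (LinearMap.single R M i) (x i) :=
  (lift.tprod x).trans (by simp)

theorem ofPiTensor_singleAlgHom (i : ι) (a : MySym R (M i)) :
    ofPiTensor (singleAlgHom i a) = symMap R (LinearMap.single R M i) a := by
  rw [singleAlgHom_apply, ofPiTensor_tprod, Finset.prod_eq_single i]
  · simp
  · intro j _ hj
    simp [Pi.mulSingle_eq_of_ne hj]
  · simp

theorem toPiTensor_symι (v : Π i, M i) :
    toPiTensor (symι R (Π i, M i) v) = ∑ i, singleAlgHom i (symι R (M i) (v i)) := by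
  simp [toPiTensor]

theorem ofPiTensor_comp_toPiTensor :
    (ofPiTensor (R := R) (M := M)).comp toPiTensor = AlgHom.id R _ :=
  algHom_ext fun v => by
    simp only [AlgHom.comp_apply, AlgHom.id_apply, toPiTensor_symι, map_sum,
      ofPiTensor_singleAlgHom, symMap_symι, LinearMap.single_apply]
    rw [← map_sum, Finset.univ_sum_single]

theorem toPiTensor_comp_ofPiTensor :
    (toPiTensor (R := R) (M := M)).comp ofPiTensor = AlgHom.id R _ :=
  PiTensorProduct.algHom_ext fun i => MySym.algHom_ext fun x => by
    simp only [AlgHom.comp_apply, AlgHom.id_apply, ofPiTensor_singleAlgHom, symMap_symι,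
      toPiTensor_symι, LinearMap.single_apply]
    rw [Finset.sum_eq_single i (fun j _ hj => by rw [Pi.single_eq_of_ne hj, map_zero, map_zero])
      (by simp), Pi.single_eq_same]

def piTensorEquiv : (⨂[R] i, MySym R (M i)) ≃ₐ[R] MySym R (Π i, M i) :=
  .ofAlgHom ofPiTensor toPiTensor ofPiTensor_comp_toPiTensor toPiTensor_comp_ofPiTensor

@[simp] theorem piTensorEquiv_apply (x : ⨂[R] i, MySym R (M i)) :
    piTensorEquiv x = ofPiTensor x :=
  rfl

theorem ofPiTensor_map (f : ∀ i, M i →ₗ[R] N i) (x : ⨂[R] i, MySym R (M i)) :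
    ofPiTensor (map (fun i => (symMap R (f i)).toLinearMap) x) =
      symMap R (LinearMap.piMap f) (ofPiTensor x) := by
  induction x using PiTensorProduct.induction_on with
  | smul_tprod c x =>
    simp only [map_smul, map_tprod, ofPiTensor_tprod, map_prod, AlgHom.toLinearMap_apply,
      symMap_symMap, LinearMap.piMap_comp_single]
  | add x y hx hy => simp only [map_add, hx, hy]

end

section

variable {R} {ι κ : Type*} [Fintype ι] [DecidableEq ι] [Fintype κ] [DecidableEq κ]
  {M : Type*} [AddCommGroup M] [Module R M]

theorem ofPiTensor_reindex (e : ι ≃ κ) (x : ⨂[R] _i : ι, MySym R M) :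
    ofPiTensor (reindex R (fun _ => MySym R M) e x) =
      symMap R (LinearMap.funLeft R M e.symm) (ofPiTensor x) := by
  induction x using PiTensorProduct.induction_on with
  | smul_tprod c x =>
    simp only [map_smul, reindex_tprod, ofPiTensor_tprod, map_prod,
      symMap_symMap, LinearMap.funLeft_comp_single, Equiv.symm_symm]
    exact congrArg _ (Fintype.prod_equiv e _ _ fun i => by rw [Equiv.symm_apply_apply]).symm
  | add x y hx hy => simp only [map_add, hx, hy]

end

end MySym

theorem indAct_eq_funLeft_comp_piMap (g : G) :
    indAct R H V ρ perm hh g =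
      LinearMap.funLeft R V (perm g).symm ∘ₗ LinearMap.piMap fun i => (ρ (hh g i) : V →ₗ[R] V) :=
  rfl

theorem norm_of_symmetricAlgebra_eq_symmetricAlgebra_of_ind :
    ∃ e : (⨂[R] _i : Fin d, MySym R V) ≃ₐ[R] MySym R (Fin d → V),
      ∀ (g : G) (w : ⨂[R] _i : Fin d, MySym R V),
        e (normAct R H V ρ perm hh g w) =
          symMap R (indAct R H V ρ perm hh g) (e w) :=
  ⟨MySym.piTensorEquiv, fun g w => by
    rw [MySym.piTensorEquiv_apply, normAct, LinearMap.comp_apply, LinearEquiv.coe_coe,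
      MySym.ofPiTensor_reindex, MySym.ofPiTensor_map, MySym.symMap_symMap,
      indAct_eq_funLeft_comp_piMap, MySym.piTensorEquiv_apply]⟩
end
end

section
/- Let k be a field of characteristic p > 0, let F and G be formal group laws over k, and let φ(t) ∈ t·k[[t]] be a nonzero homomorphism from F to G (i.e. φ(F(x,y)) = G(φ(x),φ(y))) with φ'(0) = 0. Then there exists a power series ψ(t) ∈ t·k[[t]] with φ(t) = ψ(t^p), and ψ is a homomorphism from the Frobenius twist F^{(p)} to G, where F^{(p)} is obtained from F by raising all coefficients to the p-th power. -/
noncomputable section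

open scoped Classical

/-- The constant finitely-supported function with value `N` on a finite type. -/
def constBnd (τ : Type*) [Fintype τ] (N : ℕ) : τ →₀ ℕ :=
  Finsupp.equivFunOnFinite.symm fun _ => N

/-- Substitution of the family of power series `a i` (each assumed to have zero
constant term) into the multivariate power series `F`.  The coefficient of a
monomial `d` is computed from polynomial truncations at total degree beyond that
of `d`; when each `a i` has zero constant term this agrees with the usual
substitution `F(a)` of formal power series.  Since `PowerSeries R` is by definition
`MvPowerSeries Unit R`, this also provides composition of one-variable power
series and substitution between one- and multi-variable power series. -/
def msubst {R : Type*} [CommRing R] {σ τ : Type*} [Fintype σ] [Fintype τ]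
    (F : MvPowerSeries σ R) (a : σ → MvPowerSeries τ R) : MvPowerSeries τ R :=
  fun d =>
    MvPolynomial.coeff d
      (MvPolynomial.aeval
        (fun i => MvPowerSeries.trunc R (constBnd τ (d.sum (fun _ m => m) + 1)) (a i))
        (MvPowerSeries.trunc R (constBnd σ (d.sum (fun _ m => m) + 1)) F))

/-- Associativity of a would-be formal group law: `F(F(x,y),z) = F(x,F(y,z))`. -/
def IsAssocFGL {R : Type*} [CommRing R] (F : MvPowerSeries (Fin 2) R) : Prop :=
  msubst F ![msubst F ![(MvPowerSeries.X 0 : MvPowerSeries (Fin 3) R),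
        MvPowerSeries.X 1], MvPowerSeries.X 2]
      = msubst F ![(MvPowerSeries.X 0 : MvPowerSeries (Fin 3) R),
        msubst F ![(MvPowerSeries.X 1 : MvPowerSeries (Fin 3) R), MvPowerSeries.X 2]]

/-- Commutativity of a would-be formal group law: `F(y,x) = F(x,y)`. -/
def IsCommFGL {R : Type*} [CommRing R] (F : MvPowerSeries (Fin 2) R) : Prop :=
  msubst F ![(MvPowerSeries.X 1 : MvPowerSeries (Fin 2) R), MvPowerSeries.X 0] = F

/-- A (one-dimensional, commutative) formal group law over a commutative ring `R`:
a power series `F(x,y) = x + y + (higher order terms)` (no constant term, both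
linear coefficients equal to `1`) that is associative and commutative. -/
structure FormalGroupLaw (R : Type*) [CommRing R] where
  F : MvPowerSeries (Fin 2) R
  coeff_zero : MvPowerSeries.coeff 0 F = 0
  coeff_X : MvPowerSeries.coeff (Finsupp.single (0 : Fin 2) 1) F = 1
  coeff_Y : MvPowerSeries.coeff (Finsupp.single (1 : Fin 2) 1) F = 1
  assoc : IsAssocFGL F
  comm : IsCommFGL F

/-!
Differentiating `φ(F(x,y)) = G(φ(x),φ(y))` in `x` and setting `x = 0` gives
`φ'(F(0,y)) · F_x(0,y) = G_x(0,φ(y)) · φ'(0) = 0`. As `F(0,y) = y + O(y²)` can be inverted under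
substitution and `F_x(0,y) = 1 + O(y)` is a unit, `φ' = 0`; in characteristic `p` this means that
only exponents divisible by `p` occur, i.e. `φ(t) = ψ(t^p)`. Finally `t ↦ t^p` is injective on
power series and sends `ψ(F^{(p)})` to `ψ(F^p) = φ(F)` and `G(ψ(x),ψ(y))` to `G(φ(x),φ(y))`.

`msubst` coincides with Mathlib's `MvPowerSeries.subst` once the substituted series have no
constant term (`MvPowerSeries.msubst_eq_subst`), so Mathlib's substitution calculus applies.
-/

theorem MvPolynomial.coe_aeval {R σ τ : Type*} [CommRing R] (b : σ → MvPolynomial τ R)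
    (P : MvPolynomial σ R) :
    ((aeval b P : MvPolynomial τ R) : MvPowerSeries τ R) =
      aeval (fun i => (b i : MvPowerSeries τ R)) P := by
  simpa using AlgHom.congr_fun
    (comp_aeval (f := b) (coeToMvPowerSeries.algHom (σ := τ) (R := R) R)) P

namespace MvPowerSeries

theorem constantCoeff_trunc_eq_zero {R σ : Type*} [CommRing R] (n : σ →₀ ℕ)
    {f : MvPowerSeries σ R} (hf : constantCoeff f = 0) :
    constantCoeff (trunc R n f : MvPowerSeries σ R) = 0 := by
  rw [← coeff_zero_eq_constantCoeff_apply, MvPolynomial.coeff_coe, coeff_trunc]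
  split_ifs <;> simp [hf]

section msubst

variable {R : Type*} [CommRing R] {σ τ : Type*} [Fintype σ] [Fintype τ]

theorem truncTotal_trunc_constBnd [Nonempty σ] (n : ℕ) (f : MvPowerSeries σ R) :
    truncTotal n (trunc R (constBnd σ n) f : MvPowerSeries σ R) = truncTotal n f := by
  ext m
  rw [coeff_truncTotal_eq_ite, coeff_truncTotal_eq_ite]
  split_ifs with hm
  · rw [MvPolynomial.coeff_coe, coeff_trunc, if_pos]
    have hle : ∀ i, m i < n := fun i => (Finsupp.le_degree i m).trans_lt hm
    exact lt_of_le_of_ne (fun i => (hle i).le) fun h =>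
      (hle (Classical.arbitrary σ)).ne (by rw [h]; rfl)
  · rfl

theorem coeff_msubst (f : MvPowerSeries σ R) (a : σ → MvPowerSeries τ R) (d : τ →₀ ℕ) :
    coeff d (msubst f a) =
      coeff d (subst (fun i => (trunc R (constBnd τ (d.degree + 1)) (a i) : MvPowerSeries τ R))
        (trunc R (constBnd σ (d.degree + 1)) f : MvPowerSeries σ R)) := by
  rw [subst_coe, ← MvPolynomial.coe_aeval, MvPolynomial.coeff_coe]
  rfl

theorem msubst_eq_subst [Nonempty σ] [Nonempty τ] {a : σ → MvPowerSeries τ R}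
    (ha : ∀ i, constantCoeff (a i) = 0) (f : MvPowerSeries σ R) :
    msubst f a = f.subst a := by
  ext d
  -- Below total degree `deg d + 1`, the box truncations in `msubst` change nothing.
  have hd : d.degree < d.degree + 1 := Nat.lt_succ_self _
  rw [coeff_msubst, ← coeff_truncTotal _ hd, ← coeff_truncTotal (subst a f) hd,
    truncTotal_subst ha, truncTotal_subst fun i => constantCoeff_trunc_eq_zero _ (ha i)]
  simp only [truncTotal_trunc_constBnd]

end msubst

section ChainRule

variable {R : Type*} [CommRing R] {σ τ : Type*} {a : σ → MvPowerSeries τ R}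

theorem truncTotal_sub_truncTotal [Finite σ] (N : ℕ) (f : MvPowerSeries σ R) :
    truncTotal N (f - (truncTotal N f : MvPowerSeries σ R)) = 0 := by
  ext m
  simp only [map_sub, MvPolynomial.coeff_sub, coeff_truncTotal_eq_ite, MvPolynomial.coeff_coe]
  split_ifs <;> simp

theorem truncTotal_subst_eq_zero [Finite σ] [Finite τ] (ha : ∀ i, constantCoeff (a i) = 0)
    {N : ℕ} {f : MvPowerSeries σ R} (hf : truncTotal N f = 0) : truncTotal N (subst a f) = 0 := by
  rw [truncTotal_subst_eq_truncTotal_truncTotal_subst ha, hf, MvPolynomial.coe_zero,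
    ← coe_substAlgHom (hasSubst_of_constantCoeff_zero ha), map_zero, map_zero]

theorem truncTotal_pderiv_eq_zero [Finite σ] {N : ℕ} {f : MvPowerSeries σ R}
    (hf : truncTotal (N + 1) f = 0) (i : σ) : truncTotal N (pderiv R i f) = 0 := by
  ext m
  rw [coeff_truncTotal_eq_ite, coeff_pderiv, MvPolynomial.coeff_zero]
  split_ifs with hm
  · have : (m + Finsupp.single i 1).degree < N + 1 := by simpa using hm
    rw [← coeff_truncTotal f this, hf, MvPolynomial.coeff_zero, zero_mul]
  · rfl

theorem coeff_mul_eq_zero_of_truncTotal_eq_zero [Finite σ] {N : ℕ} {f : MvPowerSeries σ R}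
    (hf : truncTotal N f = 0) (g : MvPowerSeries σ R) {n : σ →₀ ℕ} (hn : n.degree < N) :
    coeff n (f * g) = 0 := by
  rw [← coeff_truncTotal_mul_truncTotal_eq_coeff_mul _ _ hn, hf, zero_mul,
    MvPolynomial.coeff_zero]

theorem pderiv_subst_coe [Fintype σ] (ha : HasSubst a) (j : τ) (P : MvPolynomial σ R) :
    pderiv R j (subst a (P : MvPowerSeries σ R)) =
      ∑ i, subst a (pderiv R i (P : MvPowerSeries σ R)) * pderiv R j (a i) := by
  classical
  simp only [← coe_substAlgHom ha]
  induction P using MvPolynomial.induction_on with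
  | C r =>
    simp only [MvPolynomial.coe_C, pderiv_C, map_zero, zero_mul, Finset.sum_const_zero,
      coe_substAlgHom, subst_C]
  | add P Q hP hQ =>
    simp only [MvPolynomial.coe_add, map_add, hP, hQ, add_mul, Finset.sum_add_distrib]
  | mul_X P k hP =>
    simp only [MvPolynomial.coe_mul, MvPolynomial.coe_X, map_mul, Derivation.leibniz, hP,
      pderiv_X, map_add, smul_eq_mul, substAlgHom_X, add_mul, Finset.sum_add_distrib,
      Finset.mul_sum, Pi.single_apply, apply_ite, map_one, map_zero]
    simp [mul_assoc]

theorem pderiv_subst [Fintype σ] [Finite τ] (ha : ∀ i, constantCoeff (a i) = 0) (j : τ)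
    (f : MvPowerSeries σ R) :
    pderiv R j (subst a f) = ∑ i, subst a (pderiv R i f) * pderiv R j (a i) := by
  have hs := hasSubst_of_constantCoeff_zero ha
  ext n
  -- The coefficient at `n` only depends on `f` below degree `deg n + 2`, and polynomials obey
  -- the chain rule.
  obtain ⟨P, r, hr, rfl⟩ : ∃ (P : MvPolynomial σ R) (r : MvPowerSeries σ R),
      truncTotal (n.degree + 1 + 1) r = 0 ∧ f = P + r :=
    ⟨_, _, truncTotal_sub_truncTotal _ f, (add_sub_cancel _ f).symm⟩
  have hlhs : coeff n (pderiv R j (subst a r)) = 0 := by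
    rw [coeff_pderiv, ← coeff_truncTotal (n := n.degree + 1 + 1) _ (by simp),
      truncTotal_subst_eq_zero ha hr, MvPolynomial.coeff_zero, zero_mul]
  have hrhs : coeff n (∑ i, subst a (pderiv R i r) * pderiv R j (a i)) = 0 := by
    refine (map_sum _ _ _).trans (Finset.sum_eq_zero fun i _ => ?_)
    exact coeff_mul_eq_zero_of_truncTotal_eq_zero
      (truncTotal_subst_eq_zero ha (truncTotal_pderiv_eq_zero hr i)) _ (Nat.lt_succ_self _)
  simp only [subst_add hs, map_add, add_mul, Finset.sum_add_distrib, pderiv_subst_coe hs, hlhs,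
    hrhs]

end ChainRule

variable {R : Type*} [CommRing R]

theorem hasSubst_zero_X : HasSubst ![(0 : PowerSeries R), PowerSeries.X] := HasSubst.zero_X

theorem coeff_subst_zero_X (f : MvPowerSeries (Fin 2) R) (j : ℕ) :
    PowerSeries.coeff j (subst ![0, PowerSeries.X] f) = coeff (Finsupp.single 1 j) f := by
  rw [PowerSeries.coeff, coeff_subst hasSubst_zero_X, finsum_eq_single _ (Finsupp.single 1 j)]
  · simp [Finsupp.prod_fintype, Fin.prod_univ_two]
  · intro d hd
    simp only [Finsupp.prod_fintype _ _ (fun _ => pow_zero _), Fin.prod_univ_two]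
    rcases eq_or_ne (d 0) 0 with h0 | h0
    · have h1 : d 1 ≠ j := fun h1 => hd (by ext i; fin_cases i <;> simp [h0, h1])
      simp [h0, PowerSeries.coeff_X_pow, Ne.symm h1]
    · simp [zero_pow h0]

theorem expand_injective {σ : Type*} (p : ℕ) (hp : p ≠ 0) :
    Function.Injective (expand p hp : MvPowerSeries σ R → MvPowerSeries σ R) := fun f g h =>
  ext fun m => by rw [← coeff_expand_smul p hp f, h, coeff_expand_smul]

end MvPowerSeries

namespace PowerSeries

variable {R : Type*} [CommRing R]

open MvPowerSeries (pderiv)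

theorem msubst_eq_subst {τ : Type*} [Fintype τ] [Nonempty τ] {g : MvPowerSeries τ R}
    (hg : MvPowerSeries.constantCoeff g = 0) (f : R⟦X⟧) :
    msubst f (fun _ : Unit => g) = f.subst g :=
  MvPowerSeries.msubst_eq_subst (fun _ => hg) f

theorem msubst_pair_eq_subst (G : MvPowerSeries (Fin 2) R) {f : R⟦X⟧}
    (hf : constantCoeff f = 0) :
    msubst G ![msubst f (fun _ : Unit => (MvPowerSeries.X 0 : MvPowerSeries (Fin 2) R)),
        msubst f (fun _ : Unit => (MvPowerSeries.X 1 : MvPowerSeries (Fin 2) R))] =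
      MvPowerSeries.subst ![f.subst (MvPowerSeries.X 0), f.subst (MvPowerSeries.X 1)] G := by
  have hX (i : Fin 2) := MvPowerSeries.constantCoeff_X (R := R) i
  have hfX (i : Fin 2) := constantCoeff_subst_eq_zero (hX i) f hf
  rw [msubst_eq_subst (hX 0), msubst_eq_subst (hX 1),
    MvPowerSeries.msubst_eq_subst (Fin.forall_fin_two.2 ⟨hfX 0, hfX 1⟩)]

theorem pderiv_subst {τ : Type*} [Finite τ] {g : MvPowerSeries τ R}
    (hg : MvPowerSeries.constantCoeff g = 0) (j : τ) (f : R⟦X⟧) :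
    pderiv R j (f.subst g) = (d⁄dX R f).subst g * pderiv R j g :=
  (MvPowerSeries.pderiv_subst (fun _ => hg) j f).trans (Fintype.sum_unique _)

theorem eq_zero_of_subst_eq_zero {f g : R⟦X⟧} (hg0 : constantCoeff g = 0)
    (hg1 : IsUnit (coeff 1 g)) (h : f.subst g = 0) : f = 0 := by
  have hQ := HasSubst.substInvOfIsUnit g hg1
  calc f = subst (subst (g.substInvOfIsUnit hg1) g) f := by
        rw [subst_substInvOfIsUnit_right g hg0 hg1, X_subst]
    _ = subst (g.substInvOfIsUnit hg1) (subst g f) :=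
        (subst_comp_subst_apply (HasSubst.of_constantCoeff_zero' hg0) hQ f).symm
    _ = 0 := by rw [h, ← coe_substAlgHom hQ, map_zero]

theorem subst_zero_X_subst {g : MvPowerSeries (Fin 2) R} (hg : MvPowerSeries.constantCoeff g = 0)
    (f : R⟦X⟧) :
    MvPowerSeries.subst ![(0 : R⟦X⟧), X] (f.subst g) = f.subst (MvPowerSeries.subst ![0, X] g) :=
  MvPowerSeries.subst_comp_subst_apply
    (MvPowerSeries.hasSubst_of_constantCoeff_zero fun _ => hg) MvPowerSeries.hasSubst_zero_X f

theorem subst_zero_X_pderiv_subst_pair (G : MvPowerSeries (Fin 2) R) {φ : R⟦X⟧}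
    (hφ0 : constantCoeff φ = 0) (hφ1 : coeff 1 φ = 0) :
    MvPowerSeries.subst ![(0 : R⟦X⟧), X] (pderiv R 0
      (MvPowerSeries.subst ![φ.subst (MvPowerSeries.X 0), φ.subst (MvPowerSeries.X 1)] G)) = 0 := by
  have hX (i : Fin 2) := MvPowerSeries.constantCoeff_X (R := R) i
  have hφX (i : Fin 2) := constantCoeff_subst_eq_zero (hX i) φ hφ0
  have hφ'0 : constantCoeff (d⁄dX R φ) = 0 := by
    rw [← coeff_zero_eq_constantCoeff_apply, coeff_derivative, zero_add, hφ1, zero_mul]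
  rw [MvPowerSeries.pderiv_subst (Fin.forall_fin_two.2 ⟨hφX 0, hφX 1⟩), Fin.sum_univ_two]
  simp only [Matrix.cons_val_zero, Matrix.cons_val_one, pderiv_subst (hX _),
    MvPowerSeries.pderiv_X_self, MvPowerSeries.pderiv_X_of_ne (one_ne_zero (α := Fin 2)),
    mul_zero, mul_one, add_zero, MvPowerSeries.subst_mul MvPowerSeries.hasSubst_zero_X,
    subst_zero_X_subst (hX _), MvPowerSeries.subst_X MvPowerSeries.hasSubst_zero_X]
  rw [subst_zero_of_constantCoeff_zero hφ'0, mul_zero]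

theorem derivative_eq_zero_of_subst_eq_subst {F G : MvPowerSeries (Fin 2) R}
    (hF0 : MvPowerSeries.constantCoeff F = 0)
    (hFX : MvPowerSeries.coeff (Finsupp.single 0 1) F = 1)
    (hFY : MvPowerSeries.coeff (Finsupp.single 1 1) F = 1)
    {φ : R⟦X⟧} (hφ0 : constantCoeff φ = 0) (hφ1 : coeff 1 φ = 0)
    (hom : φ.subst F =
      MvPowerSeries.subst ![φ.subst (MvPowerSeries.X 0), φ.subst (MvPowerSeries.X 1)] G) :
    d⁄dX R φ = 0 := by
  let ρ : MvPowerSeries (Fin 2) R →ₐ[R] R⟦X⟧ :=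
    MvPowerSeries.substAlgHom MvPowerSeries.hasSubst_zero_X
  have hρ : ⇑ρ = MvPowerSeries.subst ![0, X] := MvPowerSeries.coe_substAlgHom _
  have hρ_coeff (S : MvPowerSeries (Fin 2) R) (j : ℕ) :
      coeff j (ρ S) = MvPowerSeries.coeff (Finsupp.single 1 j) S := by
    rw [hρ, MvPowerSeries.coeff_subst_zero_X]
  have hlhs : ρ (pderiv R 0 (φ.subst F)) = (d⁄dX R φ).subst (ρ F) * ρ (pderiv R 0 F) := by
    rw [pderiv_subst hF0, map_mul, hρ, subst_zero_X_subst hF0]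
  have hrhs : ρ (pderiv R 0 (φ.subst F)) = 0 := by
    rw [hρ, hom]
    exact subst_zero_X_pderiv_subst_pair G hφ0 hφ1
  have hunit : IsUnit (ρ (pderiv R 0 F)) := by
    rw [isUnit_iff_constantCoeff, ← coeff_zero_eq_constantCoeff_apply, hρ_coeff,
      MvPowerSeries.coeff_pderiv]
    simp [hFX]
  refine eq_zero_of_subst_eq_zero (g := ρ F) ?_ ?_ (hunit.mul_left_eq_zero.1 (hlhs ▸ hrhs))
  · rw [← coeff_zero_eq_constantCoeff_apply, hρ_coeff]
    simpa using hF0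
  · rw [hρ_coeff, hFY]
    exact isUnit_one

theorem coeff_eq_zero_of_derivative_eq_zero {p : ℕ} (hp : p.Prime) [CharP R p] {f : R⟦X⟧}
    (hf : d⁄dX R f = 0) {n : ℕ} (hn : ¬ p ∣ n) : coeff n f = 0 := by
  obtain _ | m := n
  · exact absurd (dvd_zero p) hn
  · have h := congr(coeff m $hf)
    rw [coeff_derivative, map_zero] at h
    exact ((CharP.isUnit_natCast_iff hp).2 hn).mul_left_eq_zero.1 (by exact_mod_cast h)

theorem exists_eq_expand_of_coeff_eq_zero {p : ℕ} (hp : p ≠ 0) {f : R⟦X⟧}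
    (hf : ∀ n, ¬ p ∣ n → coeff n f = 0) : ∃ g, f = expand p hp g := by
  refine ⟨mk fun n => coeff (p * n) f, ?_⟩
  ext n
  rw [coeff_expand]
  split_ifs with hn
  · obtain ⟨m, rfl⟩ := hn
    rw [coeff_mk, Nat.mul_div_cancel_left _ (Nat.pos_of_ne_zero hp)]
  · exact hf n hn

theorem subst_expand {τ : Type*} {p : ℕ} (hp : p ≠ 0) {g : MvPowerSeries τ R}
    (hg : MvPowerSeries.constantCoeff g = 0) (f : R⟦X⟧) :
    (expand p hp f).subst g = f.subst (g ^ p) := by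
  have hg' := HasSubst.of_constantCoeff_zero hg
  rw [expand_apply, subst_comp_subst_apply (HasSubst.X_pow hp) hg', subst_pow hg', subst_X hg']

theorem subst_map_frobenius_eq {p : ℕ} [ExpChar R p] (hp : p ≠ 0)
    {F G : MvPowerSeries (Fin 2) R} (hF0 : MvPowerSeries.constantCoeff F = 0) {ψ : R⟦X⟧}
    (hψ0 : constantCoeff ψ = 0)
    (hom : (expand p hp ψ).subst F = MvPowerSeries.subst
      ![(expand p hp ψ).subst (MvPowerSeries.X 0), (expand p hp ψ).subst (MvPowerSeries.X 1)] G) :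
    ψ.subst (MvPowerSeries.map (frobenius R p) F) =
      MvPowerSeries.subst ![ψ.subst (MvPowerSeries.X 0), ψ.subst (MvPowerSeries.X 1)] G := by
  have hX (i : Fin 2) := MvPowerSeries.constantCoeff_X (R := R) i
  have hψX (i : Fin 2) := constantCoeff_subst_eq_zero (hX i) ψ hψ0
  have hFp : MvPowerSeries.constantCoeff (MvPowerSeries.map (frobenius R p) F) = 0 := by
    simp [hF0]
  apply MvPowerSeries.expand_injective p hp
  rw [expand_subst _ _ (HasSubst.of_constantCoeff_zero hFp), MvPowerSeries.expand_subst _ _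
    (MvPowerSeries.hasSubst_of_constantCoeff_zero (Fin.forall_fin_two.2 ⟨hψX 0, hψX 1⟩)),
    ← MvPowerSeries.map_expand, MvPowerSeries.map_frobenius_expand, ← subst_expand hp hF0, hom]
  congr 1
  funext i
  fin_cases i <;> simp [expand_subst _ _ (HasSubst.X _), subst_expand hp (hX _)]

end PowerSeries

theorem hom_of_fgl_with_zero_derivative_factors_through_frobenius_general
    {k : Type*} [Field k] (p : ℕ) [Fact p.Prime] [CharP k p]
    (Φ Γ : FormalGroupLaw k) (φ : PowerSeries k)
    (hφ0 : PowerSeries.coeff 0 φ = 0)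
    (hhom : msubst φ (fun _ : Unit => Φ.F)
      = msubst Γ.F ![msubst φ (fun _ : Unit => (MvPowerSeries.X 0 : MvPowerSeries (Fin 2) k)),
          msubst φ (fun _ : Unit => (MvPowerSeries.X 1 : MvPowerSeries (Fin 2) k))])
    (hφ1 : PowerSeries.coeff 1 φ = 0) :
    ∃ ψ : PowerSeries k,
      PowerSeries.coeff 0 ψ = 0 ∧
      φ = msubst ψ (fun _ : Unit => (PowerSeries.X : PowerSeries k) ^ p) ∧
      msubst ψ (fun _ : Unit => MvPowerSeries.map (frobenius k p) Φ.F)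
        = msubst Γ.F ![msubst ψ (fun _ : Unit => (MvPowerSeries.X 0 : MvPowerSeries (Fin 2) k)),
            msubst ψ (fun _ : Unit => (MvPowerSeries.X 1 : MvPowerSeries (Fin 2) k))] := by
  have hp : p.Prime := Fact.out
  have hF0 : MvPowerSeries.constantCoeff Φ.F = 0 := Φ.coeff_zero
  rw [PowerSeries.coeff_zero_eq_constantCoeff_apply] at hφ0
  rw [PowerSeries.msubst_eq_subst hF0, PowerSeries.msubst_pair_eq_subst _ hφ0] at hhom
  have hφ' := PowerSeries.derivative_eq_zero_of_subst_eq_subst hF0 Φ.coeff_X Φ.coeff_Y hφ0 hφ1 hhom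
  obtain ⟨ψ, rfl⟩ := PowerSeries.exists_eq_expand_of_coeff_eq_zero hp.ne_zero
    fun n hn => PowerSeries.coeff_eq_zero_of_derivative_eq_zero hp hφ' hn
  rw [PowerSeries.constantCoeff_expand] at hφ0
  refine ⟨ψ, by rwa [PowerSeries.coeff_zero_eq_constantCoeff_apply], ?_, ?_⟩
  · have hXp : PowerSeries.constantCoeff (PowerSeries.X ^ p : PowerSeries k) = 0 := by
      simp [hp.ne_zero]
    rw [PowerSeries.msubst_eq_subst hXp, PowerSeries.expand_apply]
  · rw [PowerSeries.msubst_eq_subst (by simp [hF0]), PowerSeries.msubst_pair_eq_subst _ hφ0]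
    exact PowerSeries.subst_map_frobenius_eq hp.ne_zero hF0 hφ0 hhom

/-- Let `k` be a field of characteristic `p > 0`, `F` and `G` formal
group laws over `k`, and `φ ∈ t·k[[t]]` a nonzero homomorphism from `F` to `G`
(`φ(F(x,y)) = G(φ(x),φ(y))`) with `φ'(0) = 0`.  Then there is `ψ ∈ t·k[[t]]` with
`φ(t) = ψ(t^p)`, and `ψ` is a homomorphism from the Frobenius twist `F^{(p)}`
(coefficientwise `p`-th powers) to `G`. -/
theorem hom_of_fgl_with_zero_derivative_factors_through_frobenius
    {k : Type*} [Field k] (p : ℕ) [Fact p.Prime] [CharP k p]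
    (Φ Γ : FormalGroupLaw k) (φ : PowerSeries k)
    (hφ0 : PowerSeries.coeff 0 φ = 0)
    (hhom : msubst φ (fun _ : Unit => Φ.F)
      = msubst Γ.F ![msubst φ (fun _ : Unit => (MvPowerSeries.X 0 : MvPowerSeries (Fin 2) k)),
          msubst φ (fun _ : Unit => (MvPowerSeries.X 1 : MvPowerSeries (Fin 2) k))])
    (hne : φ ≠ 0) (hφ1 : PowerSeries.coeff 1 φ = 0) :
    ∃ ψ : PowerSeries k,
      PowerSeries.coeff 0 ψ = 0 ∧
      φ = msubst ψ (fun _ : Unit => (PowerSeries.X : PowerSeries k) ^ p) ∧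
      msubst ψ (fun _ : Unit => MvPowerSeries.map (frobenius k p) Φ.F)
        = msubst Γ.F ![msubst ψ (fun _ : Unit => (MvPowerSeries.X 0 : MvPowerSeries (Fin 2) k)),
            msubst ψ (fun _ : Unit => (MvPowerSeries.X 1 : MvPowerSeries (Fin 2) k))] :=
  hom_of_fgl_with_zero_derivative_factors_through_frobenius_general p Φ Γ φ hφ0 hhom hφ1
end
end
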